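/- arXiv:2601.19830 — 4 statements merged into one kernel-verified Lean document; each statement's English description precedes it below -/
import Mathlib

section
/- Let A be an n-by-n real skew-symmetric matrix. Then all Pfaffians of even-sized principal submatrices of A are positive if and only if all determinants of odd-sized top-right almost-principal submatrices of A are positive. (A top-right almost-principal submatrix is A[I∪{i}, I∪{j}] with i<j and i,j ∉ I.) -/
/-- The Pfaffian of the principal submatrix of `A` on index set `I`,
defined by the recursive expansion along the row of the smallest index;
the Pfaffian of the empty matrix is `1`. -/
noncomputable def pf {K : Type*} [Field K] {n : ℕ} (A : Matrix (Fin n) (Fin n) K)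
    (I : Finset (Fin n)) : K :=
  if h : I.Nonempty then
    ∑ j ∈ (I.erase (I.min' h)).attach,
      (-1 : K) ^ ((I.erase (I.min' h)).filter (fun a => a < j.1)).card
        * A (I.min' h) j.1 * pf A ((I.erase (I.min' h)).erase j.1)
  else 1
termination_by I.card
decreasing_by
  exact lt_of_le_of_lt (Finset.card_le_card (Finset.erase_subset _ _))
    (Finset.card_erase_lt_of_mem (I.min'_mem h))


/-!
Everything rests on the identity `det A[I∪{i}, I∪{j}] = Pf A[I∪{i,j}] · Pf A[I]` for `|I|` even
and `i < j`. With it, positive Pfaffians give positive minors; conversely, writing an even `I` as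
`J ∪ {i, j}` with `i < j`, the product `Pf A[I] · Pf A[J]` is a positive minor and `Pf A[J] > 0`
by induction on `|I|`.

The identity is proved by a simultaneous induction with `det A[I, I] = Pf A[I]²` (`|I|` even)
and `det A[X∪{i}, X∪{j}] = Pf A[X∪{i}] · Pf A[X∪{j}]` (`|X|` odd): the Laplace expansion of each
of these minors along a suitable row or column involves only smaller minors of the other kinds,
and once a common Pfaffian factor is pulled out, what remains is the expansion of another
Pfaffian along a row.
-/

open Finset
open scoped Matrix

lemma neg_one_pow_eq_of_mod_two_eq {R : Type*} [Ring R] {a b : ℕ} (h : a % 2 = b % 2) :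
    (-1 : R) ^ a = (-1) ^ b := by
  rw [neg_one_pow_eq_pow_mod_two, h, ← neg_one_pow_eq_pow_mod_two]

lemma neg_one_pow_eq_neg_of_mod_two_eq {R : Type*} [Ring R] {a b : ℕ}
    (h : a % 2 = (b + 1) % 2) : (-1 : R) ^ a = -(-1) ^ b := by
  rw [neg_one_pow_eq_of_mod_two_eq h, pow_succ, mul_neg_one]

section Positions

variable {α : Type*} [LinearOrder α]

def ltIndicator (a b : α) : ℕ := if a < b then 1 else 0

lemma ltIndicator_self (a : α) : ltIndicator a a = 0 := by simp [ltIndicator]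

lemma ltIndicator_of_lt {a b : α} (h : a < b) : ltIndicator a b = 1 := if_pos h

lemma ltIndicator_of_not_lt {a b : α} (h : ¬a < b) : ltIndicator a b = 0 := if_neg h

lemma ltIndicator_add_ltIndicator {a b : α} (h : a ≠ b) :
    ltIndicator a b + ltIndicator b a = 1 := by
  rcases h.lt_or_gt with h | h <;> simp [ltIndicator, h, h.not_gt]

namespace Finset

/-- The position of `a` in `X` listed increasingly (counting from `0`) when `a ∈ X`. -/
def numBelow (X : Finset α) (a : α) : ℕ := #{b ∈ X | b < a}

lemma numBelow_insert {X : Finset α} {a : α} (ha : a ∉ X) (b : α) :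
    numBelow (insert a X) b = numBelow X b + ltIndicator a b := by
  unfold numBelow ltIndicator
  rw [filter_insert]
  split_ifs
  · rw [card_insert_of_notMem (by simp [ha])]
  · rfl

lemma numBelow_erase {X : Finset α} {a : α} (ha : a ∈ X) (b : α) :
    numBelow (X.erase a) b + ltIndicator a b = numBelow X b := by
  rw [← numBelow_insert (notMem_erase a X), insert_erase ha]

lemma numBelow_eq_zero {X : Finset α} {m : α} (hm : ∀ x ∈ X, m ≤ x) : numBelow X m = 0 := by
  simpa [numBelow, filter_eq_empty_iff] using hm

lemma numBelow_orderEmbOfFin (X : Finset α) {k : ℕ} (h : #X = k) (p : Fin k) :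
    numBelow X (X.orderEmbOfFin h p) = p := by
  have : {b ∈ X | b < X.orderEmbOfFin h p} = (Iio p).map (X.orderEmbOfFin h).toEmbedding := by
    ext b
    constructor
    · intro hb
      obtain ⟨hbX, hbp⟩ := mem_filter.1 hb
      obtain ⟨q, rfl⟩ : b ∈ Set.range (X.orderEmbOfFin h) := by simpa using hbX
      exact mem_map_of_mem _ (mem_Iio.2 ((X.orderEmbOfFin h).lt_iff_lt.1 hbp))
    · simp only [mem_map, mem_Iio]
      rintro ⟨q, hq, rfl⟩
      exact mem_filter.2 ⟨orderEmbOfFin_mem X h q, (X.orderEmbOfFin h).lt_iff_lt.2 hq⟩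
  rw [numBelow, this, card_map, Fin.card_Iio]

/-- Expanding along row `a` then row `c`, or along row `c` then row `a`, gives the term of the
pairs `{a, b}, {c, d}` the same sign. -/
lemma numBelow_erase_erase_swap {X : Finset α} {a b c d : α} (ha : a ∈ X) (hb : b ∈ X)
    (hc : c ∈ X) (hd : d ∈ X) (hab : a ≠ b) (hac : a ≠ c) (had : a ≠ d) (hbc : b ≠ c)
    (hbd : b ≠ d) (hcd : c ≠ d) :
    (numBelow X a + numBelow (X.erase a) b +
        (numBelow ((X.erase a).erase b) c + numBelow (((X.erase a).erase b).erase c) d)) % 2 =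
      (numBelow X c + numBelow (X.erase c) d +
        (numBelow ((X.erase c).erase d) a + numBelow (((X.erase c).erase d).erase a) b)) % 2 := by
  have hbXa : b ∈ X.erase a := mem_erase.2 ⟨hab.symm, hb⟩
  have hcXab : c ∈ (X.erase a).erase b := mem_erase.2 ⟨hbc.symm, mem_erase.2 ⟨hac.symm, hc⟩⟩
  have hdXc : d ∈ X.erase c := mem_erase.2 ⟨hcd.symm, hd⟩
  have haXcd : a ∈ (X.erase c).erase d := mem_erase.2 ⟨had, mem_erase.2 ⟨hac, ha⟩⟩
  have := numBelow_erase ha b; have := numBelow_erase ha c; have := numBelow_erase ha d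
  have := numBelow_erase hbXa c; have := numBelow_erase hbXa d; have := numBelow_erase hcXab d
  have := numBelow_erase hc d; have := numBelow_erase hc a; have := numBelow_erase hc b
  have := numBelow_erase hdXc a; have := numBelow_erase hdXc b; have := numBelow_erase haXcd b
  have := ltIndicator_add_ltIndicator hac; have := ltIndicator_add_ltIndicator had
  have := ltIndicator_add_ltIndicator hbc; have := ltIndicator_add_ltIndicator hbd
  omega

lemma orderEmbOfFin_comp_succAbove (X : Finset α) {k : ℕ} (h : #X = k + 1) (p : Fin (k + 1)) :
    X.orderEmbOfFin h ∘ p.succAbove =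
      (X.erase (X.orderEmbOfFin h p)).orderEmbOfFin (by simp [h]) := by
  refine orderEmbOfFin_unique _ (fun q => mem_erase.2 ⟨?_, orderEmbOfFin_mem X h _⟩)
    ((X.orderEmbOfFin h).strictMono.comp (Fin.strictMono_succAbove p))
  exact (X.orderEmbOfFin h).injective.ne (Fin.succAbove_ne p q)

lemma sum_orderEmbOfFin {M : Type*} [AddCommMonoid M] (X : Finset α) {k : ℕ} (h : #X = k)
    (f : α → M) : ∑ q, f (X.orderEmbOfFin h q) = ∑ x ∈ X, f x := by
  conv_rhs => rw [← map_orderEmbOfFin_univ X h, sum_map]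
  rfl

lemma card_insert_insert {J : Finset α} {i j : α} (hi : i ∉ J) (hj : j ∉ J) (hij : i ≠ j) :
    #(insert i (insert j J)) = #J + 2 := by
  rw [card_insert_of_notMem (by simp [hij, hi]), card_insert_of_notMem hj]

lemma ssubset_insert_insert {J : Finset α} {i j : α} (hi : i ∉ J) (hj : j ∉ J) (hij : i ≠ j) :
    J ⊂ insert i (insert j J) :=
  (ssubset_insert hj).trans (ssubset_insert (by simp [hij, hi]))

lemma exists_lt_insert_insert_eq {I : Finset α} (h : 1 < #I) :
    ∃ i j J, i ∉ J ∧ j ∉ J ∧ i < j ∧ insert i (insert j J) = I := by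
  have hne : I.Nonempty := card_pos.1 (by omega)
  have hij := I.min'_lt_max'_of_card h
  have hj : I.max' hne ∈ I.erase (I.min' hne) := mem_erase.2 ⟨hij.ne', I.max'_mem hne⟩
  refine ⟨I.min' hne, I.max' hne, (I.erase (I.min' hne)).erase (I.max' hne), by simp, by simp,
    hij, ?_⟩
  rw [insert_erase hj, insert_erase (I.min'_mem hne)]

end Finset

end Positions

lemma Matrix.apply_swap_of_transpose_eq_neg {α R : Type*} [Neg R] {A : Matrix α α R}
    (hA : Aᵀ = -A) (p q : α) : A q p = -A p q :=
  congrFun (congrFun hA p) q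

namespace Matrix

variable {α R : Type*} [LinearOrder α] [CommRing R]

/-- The minor `det A[X, Y]`, rows and columns taken in increasing order; `0` if `#X ≠ #Y`. -/
noncomputable def minor (A : Matrix α α R) (X Y : Finset α) : R :=
  if h : #Y = #X then (A.submatrix (X.orderEmbOfFin rfl) (Y.orderEmbOfFin h)).det else 0

lemma det_submatrix_orderEmbOfFin (A : Matrix α α R) {X Y : Finset α} {k : ℕ}
    (hX : #X = k) (hY : #Y = k) :
    (A.submatrix (X.orderEmbOfFin hX) (Y.orderEmbOfFin hY)).det = A.minor X Y := by
  subst hX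
  rw [minor, dif_pos hY]

lemma minor_transpose (A : Matrix α α R) (X Y : Finset α) : Aᵀ.minor Y X = A.minor X Y := by
  by_cases h : #Y = #X
  · rw [← det_submatrix_orderEmbOfFin A rfl h, ← det_submatrix_orderEmbOfFin _ h rfl,
      ← transpose_submatrix, det_transpose]
  · rw [minor, minor, dif_neg h, dif_neg (Ne.symm h)]

theorem minor_eq_sum_row (A : Matrix α α R) {X Y : Finset α} (hXY : #Y = #X) {x : α}
    (hx : x ∈ X) :
    A.minor X Y = ∑ y ∈ Y, (-1) ^ (numBelow X x + numBelow Y y) * A x y *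
      A.minor (X.erase x) (Y.erase y) := by
  obtain ⟨k, hk⟩ : ∃ k, #X = k + 1 := ⟨#X - 1, by have := card_pos.2 ⟨x, hx⟩; omega⟩
  obtain ⟨p, rfl⟩ : x ∈ Set.range (X.orderEmbOfFin hk) := by rwa [range_orderEmbOfFin]
  rw [← det_submatrix_orderEmbOfFin A hk (hXY.trans hk), det_succ_row _ p,
    ← sum_orderEmbOfFin Y (hXY.trans hk)]
  refine sum_congr rfl fun q _ => ?_
  rw [numBelow_orderEmbOfFin, numBelow_orderEmbOfFin, submatrix_submatrix,
    orderEmbOfFin_comp_succAbove, orderEmbOfFin_comp_succAbove, det_submatrix_orderEmbOfFin]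
  rfl

theorem minor_eq_sum_col (A : Matrix α α R) {X Y : Finset α} (hXY : #Y = #X) {y : α}
    (hy : y ∈ Y) :
    A.minor X Y = ∑ x ∈ X, (-1) ^ (numBelow X x + numBelow Y y) * A x y *
      A.minor (X.erase x) (Y.erase y) := by
  rw [← minor_transpose, minor_eq_sum_row _ hXY.symm hy]
  refine sum_congr rfl fun x _ => ?_
  rw [add_comm (numBelow Y y), minor_transpose, transpose_apply]

theorem minor_self_eq_zero_of_odd [NoZeroDivisors R] [CharZero R] {A : Matrix α α R} (hA : Aᵀ = -A)
    {X : Finset α} (hX : Odd #X) : A.minor X X = 0 := by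
  rw [← det_submatrix_orderEmbOfFin A rfl rfl]
  set M := A.submatrix (X.orderEmbOfFin rfl) (X.orderEmbOfFin rfl)
  have hM : Mᵀ = -M := by
    rw [transpose_submatrix, hA]
    rfl
  have h := congrArg det hM
  rw [det_transpose, det_neg, Fintype.card_fin, hX.neg_one_pow, neg_one_mul] at h
  exact CharZero.eq_neg_self_iff.1 h

end Matrix

section Pfaffian

variable {K : Type*} [Field K] {n : ℕ}

lemma pf_empty (A : Matrix (Fin n) (Fin n) K) : pf A ∅ = 1 := by
  rw [pf]; simp

lemma pf_eq_sum_row_of_forall_le (A : Matrix (Fin n) (Fin n) K) {S : Finset (Fin n)} {m : Fin n}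
    (hm : m ∈ S) (hmin : ∀ x ∈ S, m ≤ x) :
    pf A S = ∑ b ∈ S.erase m, (-1) ^ (numBelow S m + numBelow (S.erase m) b) * A m b *
      pf A ((S.erase m).erase b) := by
  have hne : S.Nonempty := ⟨m, hm⟩
  obtain rfl : S.min' hne = m := le_antisymm (S.min'_le m hm) (hmin _ (S.min'_mem hne))
  rw [pf, dif_pos hne, numBelow_eq_zero hmin]
  simp_rw [zero_add]
  exact sum_attach _ fun b => (-1 : K) ^ numBelow (S.erase (S.min' hne)) b * A (S.min' hne) b *
    pf A ((S.erase (S.min' hne)).erase b)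

lemma pf_expansion_term_swap (A : Matrix (Fin n) (Fin n) K) {S : Finset (Fin n)}
    {a b c d : Fin n} (ha : a ∈ S) (hb : b ∈ S) (hc : c ∈ S) (hd : d ∈ S) (hab : a ≠ b)
    (hac : a ≠ c) (had : a ≠ d) (hbc : b ≠ c) (hbd : b ≠ d) (hcd : c ≠ d) :
    (-1) ^ (numBelow S a + numBelow (S.erase a) b) * A a b *
        ((-1) ^ (numBelow ((S.erase a).erase b) c + numBelow (((S.erase a).erase b).erase c) d) *
          A c d * pf A ((((S.erase a).erase b).erase c).erase d)) =
      (-1) ^ (numBelow S c + numBelow (S.erase c) d) * A c d *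
        ((-1) ^ (numBelow ((S.erase c).erase d) a + numBelow (((S.erase c).erase d).erase a) b) *
          A a b * pf A ((((S.erase c).erase d).erase a).erase b)) := by
  have hS : (((S.erase a).erase b).erase c).erase d = (((S.erase c).erase d).erase a).erase b := by
    ext x; simp only [mem_erase]; tauto
  have h := neg_one_pow_eq_of_mod_two_eq (R := K)
    (numBelow_erase_erase_swap ha hb hc hd hab hac had hbc hbd hcd)
  rw [pow_add, pow_add, pow_add] at h
  rw [hS]
  linear_combination (A a b * A c d * pf A ((((S.erase c).erase d).erase a).erase b)) * h

theorem pf_eq_sum_row {A : Matrix (Fin n) (Fin n) K} (hA : Aᵀ = -A) (S : Finset (Fin n))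
    {r : Fin n} (hr : r ∈ S) :
    pf A S = ∑ b ∈ S.erase r, (-1) ^ (numBelow S r + numBelow (S.erase r) b) * A r b *
      pf A ((S.erase r).erase b) := by
  induction S using Finset.strongInduction generalizing r with
  | H S ih =>
    have hS : S.Nonempty := ⟨r, hr⟩
    set m := S.min' hS
    have hm : m ∈ S := S.min'_mem hS
    have hmin : ∀ x ∈ S, m ≤ x := fun x hx => S.min'_le x hx
    rcases eq_or_ne r m with rfl | hrm
    · exact pf_eq_sum_row_of_forall_le A hm hmin
    have hrSm : r ∈ S.erase m := mem_erase.2 ⟨hrm, hr⟩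
    have hmSr : m ∈ S.erase r := mem_erase.2 ⟨hrm.symm, hm⟩
    set U := (S.erase m).erase r with hU
    rw [pf_eq_sum_row_of_forall_le A hm hmin, ← add_sum_erase _ _ hrSm, ← add_sum_erase _ _ hmSr,
      erase_right_comm (s := S) (a := r)]
    -- Expand along `m` then `r`, swap the double sum, recognise the expansion along `r` then `m`.
    congr 1
    · have := numBelow_erase hm r
      rw [numBelow_eq_zero hmin, numBelow_eq_zero fun x hx => hmin x (mem_of_mem_erase hx),
        A.apply_swap_of_transpose_eq_neg hA, ← this,
        ltIndicator_of_lt (lt_of_le_of_ne (hmin r hr) hrm.symm), pow_succ]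
      ring
    · calc ∑ k ∈ U, (-1) ^ (numBelow S m + numBelow (S.erase m) k) * A m k *
            pf A ((S.erase m).erase k)
          = ∑ k ∈ U, ∑ l ∈ U.erase k, (-1) ^ (numBelow S m + numBelow (S.erase m) k) * A m k *
              ((-1) ^ (numBelow ((S.erase m).erase k) r +
                numBelow (((S.erase m).erase k).erase r) l) * A r l *
                pf A ((((S.erase m).erase k).erase r).erase l)) := by
            refine sum_congr rfl fun k hk => ?_
            have hrk : r ∈ (S.erase m).erase k := mem_erase.2 ⟨(ne_of_mem_erase hk).symm, hrSm⟩
            rw [ih _ ((erase_ssubset (mem_of_mem_erase hk)).trans (erase_ssubset hm)) hrk,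
              mul_sum, erase_right_comm]
        _ = ∑ l ∈ U, ∑ k ∈ U.erase l, (-1) ^ (numBelow S m + numBelow (S.erase m) k) * A m k *
              ((-1) ^ (numBelow ((S.erase m).erase k) r +
                numBelow (((S.erase m).erase k).erase r) l) * A r l *
                pf A ((((S.erase m).erase k).erase r).erase l)) :=
            sum_comm' fun k l => by simp only [mem_erase]; tauto
        _ = ∑ l ∈ U, (-1) ^ (numBelow S r + numBelow (S.erase r) l) * A r l *
              pf A ((S.erase r).erase l) := by
            refine sum_congr rfl fun l hl => ?_
            obtain ⟨hlr, hlm, hlS⟩ : l ≠ r ∧ l ≠ m ∧ l ∈ S := by simpa [hU] using hl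
            rw [pf_eq_sum_row_of_forall_le A (mem_erase.2 ⟨hlm.symm, hmSr⟩)
              fun x hx => hmin x (mem_of_mem_erase (mem_of_mem_erase hx)), mul_sum]
            refine sum_congr (by ext; simp only [hU, mem_erase]; tauto) fun k hk => ?_
            obtain ⟨hkm, hkl, hkr, hkS⟩ : k ≠ m ∧ k ≠ l ∧ k ≠ r ∧ k ∈ S := by simpa using hk
            exact pf_expansion_term_swap A hm hkS hr hlS hkm.symm hrm.symm hlm.symm hkr hkl hlr.symm

def AlmostPrincipalIdentity (A : Matrix (Fin n) (Fin n) K) (Y : Finset (Fin n)) : Prop :=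
  ∀ ⦃i j⦄, i ∉ Y → j ∉ Y → i ≠ j → A.minor (insert i Y) (insert j Y) =
    (-1) ^ ltIndicator j i * pf A (insert i (insert j Y)) * pf A Y

end Pfaffian

section PfaffianMinor

variable {K : Type*} [Field K] [CharZero K] {n : ℕ} {A : Matrix (Fin n) (Fin n) K}

lemma minor_self_eq_pf_sq_of_forall_ssubset (hA : Aᵀ = -A) {I : Finset (Fin n)} (hI : Even #I)
    (ih : ∀ Y ⊂ I, Even #Y → AlmostPrincipalIdentity A Y) :
    A.minor I I = pf A I ^ 2 := by
  rcases I.eq_empty_or_nonempty with rfl | ⟨r, hr⟩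
  · simp [Matrix.minor, pf_empty]
  obtain ⟨k, hk⟩ := hI
  have hIr := card_erase_of_mem hr
  have hodd : Odd #(I.erase r) := ⟨k - 1, by have := card_pos.2 ⟨r, hr⟩; omega⟩
  rw [A.minor_eq_sum_row rfl hr, ← add_sum_erase _ _ hr, Matrix.minor_self_eq_zero_of_odd hA hodd,
    mul_zero, zero_add, sq]
  nth_rw 2 [pf_eq_sum_row hA I hr]
  rw [mul_sum]
  refine sum_congr rfl fun c hc => ?_
  obtain ⟨hcr, hcI⟩ := mem_erase.1 hc
  set Y := (I.erase r).erase c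
  have hY : Even #Y := ⟨k - 1, by rw [card_erase_of_mem hc]; omega⟩
  have hrc : I.erase c = insert r Y := by
    show I.erase c = insert r ((I.erase r).erase c)
    rw [erase_right_comm, insert_erase (mem_erase.2 ⟨hcr.symm, hr⟩)]
  have h := ih Y ((erase_ssubset hc).trans (erase_ssubset hr)) hY
    (fun h => (ne_of_mem_erase h) rfl) (fun h => (ne_of_mem_erase (mem_of_mem_erase h)) rfl) hcr
  rw [← hrc, insert_erase hc, insert_erase hcI] at h
  have hs : (-1 : K) ^ (numBelow I r + numBelow I c) * (-1) ^ ltIndicator r c =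
      (-1) ^ (numBelow I r + numBelow (I.erase r) c) := by
    rw [← pow_add]
    exact neg_one_pow_eq_of_mod_two_eq (by have := numBelow_erase hr c; omega)
  rw [h]
  linear_combination (A r c * pf A I * pf A Y) * hs

lemma minor_insert_insert_of_odd_of_forall_ssubset (hA : Aᵀ = -A) {X : Finset (Fin n)}
    (hX : Odd #X) {i j : Fin n} (hi : i ∉ X) (hj : j ∉ X)
    (ih : ∀ Y ⊂ X, Even #Y → AlmostPrincipalIdentity A Y) :
    A.minor (insert i X) (insert j X) = pf A (insert i X) * pf A (insert j X) := by
  rw [A.minor_eq_sum_col (by rw [card_insert_of_notMem hi, card_insert_of_notMem hj])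
      (mem_insert_self j X), sum_insert hi, erase_insert hi, erase_insert hj,
    Matrix.minor_self_eq_zero_of_odd hA hX, mul_zero, zero_add,
    pf_eq_sum_row hA _ (mem_insert_self j X), erase_insert hj, mul_sum]
  refine sum_congr rfl fun a ha => ?_
  have hia : i ≠ a := fun h => hi (h ▸ ha)
  obtain ⟨k, hk⟩ := hX
  have h := ih (X.erase a) (erase_ssubset ha) ⟨k, by rw [card_erase_of_mem ha]; omega⟩
    (fun h => hi (mem_of_mem_erase h)) (notMem_erase a X) hia
  rw [insert_erase ha, ← erase_insert_of_ne hia] at h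
  have hs : (-1 : K) ^ (numBelow (insert i X) a + numBelow (insert j X) j) *
      (-1) ^ ltIndicator a i = -(-1) ^ (numBelow (insert j X) j + numBelow X a) := by
    rw [← pow_add]
    refine neg_one_pow_eq_neg_of_mod_two_eq ?_
    have := numBelow_insert hi a; have := numBelow_insert hj j
    have := ltIndicator_self j; have := ltIndicator_add_ltIndicator hia
    omega
  rw [h, A.apply_swap_of_transpose_eq_neg hA j a]
  linear_combination (-(A j a * pf A (insert i X) * pf A (X.erase a))) * hs

lemma almostPrincipalIdentity_of_forall_ssubset (hA : Aᵀ = -A) {I : Finset (Fin n)}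
    (hI : Even #I) (ih : ∀ Y ⊂ I, Even #Y → AlmostPrincipalIdentity A Y) :
    AlmostPrincipalIdentity A I := by
  intro i j hi hj hij
  have hjiI : j ∉ insert i I := by simp [hij.symm, hj]
  have hminor : ∀ a ∈ insert i I,
      A.minor ((insert i I).erase a) I = pf A ((insert i I).erase a) * pf A I := by
    intro a ha
    rcases mem_insert.1 ha with rfl | ha
    · rw [erase_insert hi, minor_self_eq_pf_sq_of_forall_ssubset hA hI ih, sq]
    have hia : i ≠ a := fun h => hi (h ▸ ha)
    obtain ⟨k, hk⟩ := hI
    have h := minor_insert_insert_of_odd_of_forall_ssubset hA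
      ⟨k - 1, by have := card_pos.2 ⟨a, ha⟩; rw [card_erase_of_mem ha]; omega⟩
      (fun h => hi (mem_of_mem_erase h)) (notMem_erase a I)
      fun Y hY => ih Y (hY.trans (erase_ssubset ha))
    rwa [insert_erase ha, ← erase_insert_of_ne hia] at h
  rw [A.minor_eq_sum_col (by rw [card_insert_of_notMem hi, card_insert_of_notMem hj])
      (mem_insert_self j I), erase_insert hj, insert_comm,
    pf_eq_sum_row hA _ (mem_insert_self j _), erase_insert hjiI, mul_sum, sum_mul]
  refine sum_congr rfl fun a ha => ?_
  have hs : (-1 : K) ^ (numBelow (insert i I) a + numBelow (insert j I) j) =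
      -((-1) ^ ltIndicator j i *
        (-1) ^ (numBelow (insert j (insert i I)) j + numBelow (insert i I) a)) := by
    rw [← pow_add]
    refine neg_one_pow_eq_neg_of_mod_two_eq ?_
    have := numBelow_insert hjiI j; have := numBelow_insert hj j; have := numBelow_insert hi j
    have := ltIndicator_self j; have := ltIndicator_add_ltIndicator hij
    omega
  rw [hminor a ha, A.apply_swap_of_transpose_eq_neg hA j a]
  linear_combination (-(A j a * pf A ((insert i I).erase a) * pf A I)) * hs

theorem almostPrincipalIdentity_of_even (hA : Aᵀ = -A) {I : Finset (Fin n)} (hI : Even #I) :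
    AlmostPrincipalIdentity A I := by
  induction I using Finset.strongInduction with
  | H I ih => exact almostPrincipalIdentity_of_forall_ssubset hA hI fun Y hY => ih Y hY

theorem det_submatrix_insert_insert (hA : Aᵀ = -A) {I : Finset (Fin n)} (hI : Even #I)
    {i j : Fin n} (hi : i ∉ I) (hj : j ∉ I) (hij : i < j) :
    (A.submatrix ((insert i I).orderEmbOfFin (card_insert_of_notMem hi))
        ((insert j I).orderEmbOfFin (card_insert_of_notMem hj))).det =
      pf A (insert i (insert j I)) * pf A I := by
  rw [Matrix.det_submatrix_orderEmbOfFin, almostPrincipalIdentity_of_even hA hI hi hj hij.ne,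
    ltIndicator_of_not_lt hij.not_gt, pow_zero, one_mul]

end PfaffianMinor

/-- For a real `n × n` skew-symmetric matrix `A`, all Pfaffians of even-sized
principal submatrices are positive iff all determinants of odd-sized top-right
almost-principal submatrices `A[I∪{i}, I∪{j}]` (with `i < j`, `i, j ∉ I`) are positive. -/
theorem pfaffian_pos_iff_almost_principal_pos {n : ℕ}
    (A : Matrix (Fin n) (Fin n) ℝ) (hA : A.transpose = -A) :
    (∀ I : Finset (Fin n), Even I.card → 0 < pf A I) ↔
    (∀ (I : Finset (Fin n)) (i j : Fin n) (hi : i ∉ I) (hj : j ∉ I),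
      i < j → Odd (I.card + 1) →
      0 < Matrix.det (A.submatrix
        ((insert i I).orderEmbOfFin (Finset.card_insert_of_notMem hi))
        ((insert j I).orderEmbOfFin (Finset.card_insert_of_notMem hj)))) := by
  constructor
  · intro hpf I i j hi hj hij hodd
    have hI : Even #I := by simpa [Nat.odd_add_one] using hodd
    rw [det_submatrix_insert_insert hA hI hi hj hij]
    exact mul_pos (hpf _ (by rw [card_insert_insert hi hj hij.ne]; exact hI.add even_two))
      (hpf I hI)
  · intro hdet I hI
    induction I using Finset.strongInduction with
    | H I ih =>
      rcases I.eq_empty_or_nonempty with rfl | hne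
      · simp [pf_empty]
      obtain ⟨i, j, J, hi, hj, hij, rfl⟩ :=
        exists_lt_insert_insert_eq (I := I) (by obtain ⟨k, hk⟩ := hI; have := card_pos.2 hne; omega)
      have hJ : Even #J := by
        rw [card_insert_insert hi hj hij.ne] at hI; exact (Nat.even_add.1 hI).2 even_two
      have h := hdet J i j hi hj hij (by simpa [Nat.odd_add_one] using hJ)
      rw [det_submatrix_insert_insert hA hJ hi hj hij] at h
      exact (pos_iff_pos_of_mul_pos h).2 (ih J (ssubset_insert_insert hi hj hij.ne) hJ)
end

section
/- Let F be a tract and φ : T_n ∪ A_n → F a function satisfying axiom (rGP4): for any transversal B with |B ∩ [n]*| ≡ σ (mod 2) and distinct i, j ∈ [n], φ(B \ {i,i*} ∪ {j,j*}) = (-1)^{[i∈B]+[j∈B]} φ(B ∪ {i,i*} \ {j,j*}). Then for any almost-transversal A with {i,i*} ∩ A = ∅ and {j,j*} ⊆ A (i, j ∈ [n]), one has φ(A) = (-1)^{|A ∩ [n]*| + 1 - σ} φ(A ∪ {i,i*} \ {j,j*}). -/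
/-- A tract: a commutative multiplicative monoid `F = F^× ⊔ {0}` in which every
nonzero element is invertible (a `CommGroupWithZero`), together with a null set
`N` of formal sums of elements of `F` (encoded as multisets, modulo the rule
that adding or removing a summand `0` does not change nullity), satisfying:
(T2) the only null singleton sum is `0`; (T3) there is a unique element `-1 ∈ F^×`
with `1 + (-1)` null; (T4) the null set is closed under multiplication by
elements of `F^×`. -/
structure Tract (F : Type*) [CommGroupWithZero F] where
  /-- The null set of formal sums. -/
  N : Set (Multiset F)
  /-- `0 + Σ aᵢ` is null iff `Σ aᵢ` is null. -/
  zero_cons_mem_iff : ∀ m : Multiset F, (0 ::ₘ m) ∈ N ↔ m ∈ N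
  /-- (T2) `F ∩ N = {0}`: a one-term formal sum is null iff its term is `0`. -/
  singleton_mem_iff : ∀ a : F, ({a} : Multiset F) ∈ N ↔ a = 0
  /-- (T3) There is a unique `ε ∈ F^×` with `1 + ε` null. -/
  existsUnique_neg_one : ∃! ε : F, ε ≠ 0 ∧ ({1, ε} : Multiset F) ∈ N
  /-- (T4) `c · α ∈ N` for `α ∈ N` and `c ∈ F^×`. -/
  smul_mem : ∀ c : F, c ≠ 0 → ∀ m ∈ N, Multiset.map (fun x => c * x) m ∈ N

/-- The ground set `[n] ∪ [n]*`: the element `i ∈ [n]` is `(i, false)` and its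
starred copy `i*` is `(i, true)`. -/
abbrev GroundSet (n : ℕ) := Fin n × Bool

/-- The involution `x ↦ x*`. -/
def st {n : ℕ} (x : GroundSet n) : GroundSet n := (x.1, !x.2)

/-- The skew pair `{x, x*}`. -/
def skw {n : ℕ} (x : GroundSet n) : Finset (GroundSet n) := {x, st x}

/-- The skew pair `{i, i*}` of an index `i ∈ [n]`. -/
def pr {n : ℕ} (i : Fin n) : Finset (GroundSet n) := {(i, false), (i, true)}

/-- A transversal: a subset of `[n] ∪ [n]*` containing exactly one of `i`, `i*`
for each `i ∈ [n]`. -/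
def IsTransversal {n : ℕ} (T : Finset (GroundSet n)) : Prop :=
  ∀ i : Fin n, ((i, false) ∈ T ↔ (i, true) ∉ T)

/-- An almost-transversal: an `n`-element subset of `[n] ∪ [n]*` containing
exactly one full skew pair `{i, i*}`. -/
def IsAlmostTransversal {n : ℕ} (A : Finset (GroundSet n)) : Prop :=
  A.card = n ∧ ∃! i : Fin n, (i, false) ∈ A ∧ (i, true) ∈ A

lemma tract_neg_one_sq {F : Type*} [CommGroupWithZero F] (T : Tract F)
    (ε : F) (hε₀ : ε ≠ 0) (hε : ({1, ε} : Multiset F) ∈ T.N) : ε * ε = 1 := by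
  have hinv : ε⁻¹ ≠ 0 := inv_ne_zero hε₀
  have h2 : Multiset.map (fun x => ε⁻¹ * x) ({1, ε} : Multiset F) ∈ T.N :=
    T.smul_mem _ hinv _ hε
  have hmap : Multiset.map (fun x => ε⁻¹ * x) ({1, ε} : Multiset F)
      = ({1, ε⁻¹} : Multiset F) := by
    simp [Multiset.insert_eq_cons, inv_mul_cancel₀ hε₀]
    exact Multiset.cons_swap _ _ _
  rw [hmap] at h2
  obtain ⟨e, _, hu⟩ := T.existsUnique_neg_one
  have h4 : ε⁻¹ = e := hu _ ⟨hinv, h2⟩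
  have h5 : ε = e := hu _ ⟨hε₀, hε⟩
  have h6 : ε⁻¹ = ε := h4.trans h5.symm
  calc ε * ε = ε * ε⁻¹ := by rw [h6]
    _ = 1 := mul_inv_cancel₀ hε₀

lemma pow_parity {F : Type*} [Monoid F] {ε : F} (h : ε * ε = 1) (a : ℕ) :
    ε ^ a = ε ^ (a % 2) := by
  conv_lhs => rw [← Nat.div_add_mod a 2]
  rw [pow_add, pow_mul]
  rw [show ε ^ 2 = 1 by rw [pow_two]; exact h, one_pow, one_mul]

/-- If `φ : T_n ∪ A_n → F` satisfies axiom (rGP4) — for any transversal `B` with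
`|B ∩ [n]*| ≡ σ (mod 2)` and distinct `i, j ∈ [n]`,
`φ(B \ {i,i*} ∪ {j,j*}) = (-1)^{[i∈B]+[j∈B]} φ(B ∪ {i,i*} \ {j,j*})` — then for any
almost-transversal `A` with `{i,i*} ∩ A = ∅` and `{j,j*} ⊆ A`, one has
`φ(A) = (-1)^{|A ∩ [n]*| + 1 - σ} φ(A ∪ {i,i*} \ {j,j*})`. -/
theorem rGP4_almostTransversal {n : ℕ} {F : Type*} [CommGroupWithZero F] (T : Tract F)
    (ε : F) (hε₀ : ε ≠ 0) (hε : ({1, ε} : Multiset F) ∈ T.N)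
    (σ : ℕ) (hσ : σ ≤ 1) (φ : Finset (GroundSet n) → F)
    (hrGP4 : ∀ B : Finset (GroundSet n), IsTransversal B →
      (B.filter (fun p => p.2 = true)).card % 2 = σ →
      ∀ i j : Fin n, i ≠ j →
        φ ((B \ pr i) ∪ pr j)
          = ε ^ ((if (i, false) ∈ B then 1 else 0) + (if (j, false) ∈ B then 1 else 0))
              * φ ((B ∪ pr i) \ pr j)) :
    ∀ A : Finset (GroundSet n), IsAlmostTransversal A → ∀ i j : Fin n,
      pr i ∩ A = ∅ → pr j ⊆ A →
      φ A = ε ^ ((A.filter (fun p => p.2 = true)).card + 1 - σ)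
              * φ ((A ∪ pr i) \ pr j) := by
  intro A hA i j hiA hjA
  obtain ⟨hcardA, j₀, hj₀, hj₀u⟩ := hA
  have hjf : (j, false) ∈ A := hjA (by simp [pr])
  have hjt : (j, true) ∈ A := hjA (by simp [pr])
  have hif : (i, false) ∉ A := by
    intro h
    have : (i, false) ∈ pr i ∩ A := Finset.mem_inter.mpr ⟨by simp [pr], h⟩
    simp [hiA] at this
  have hit : (i, true) ∉ A := by
    intro h
    have : (i, true) ∈ pr i ∩ A := Finset.mem_inter.mpr ⟨by simp [pr], h⟩
    simp [hiA] at this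
  have hij : i ≠ j := fun h => hif (h ▸ hjf)
  have huniq : ∀ k : Fin n, k ≠ j → ¬((k, false) ∈ A ∧ (k, true) ∈ A) := by
    intro k hk hc
    exact hk ((hj₀u k hc).trans (hj₀u j ⟨hjf, hjt⟩).symm)
  -- counting
  set c : Fin n → ℕ := fun k => (A.filter (fun p => p.1 = k)).card with hcdef
  have hsum : ∑ k, c k = n := by
    rw [Finset.card_eq_sum_card_fiberwise (fun x (_ : x ∈ A) => Finset.mem_univ x.1)] at hcardA
    exact hcardA
  have hci : c i = 0 := by
    rw [hcdef]
    simp only [Finset.card_eq_zero]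
    rw [Finset.filter_eq_empty_iff]
    rintro ⟨k, t⟩ hx h
    simp only at h
    subst h
    cases t
    · exact hif hx
    · exact hit hx
  have hcj : c j = 2 := by
    have : A.filter (fun p => p.1 = j) = {(j, false), (j, true)} := by
      ext ⟨k, t⟩
      simp only [Finset.mem_filter, Finset.mem_insert, Finset.mem_singleton, Prod.mk.injEq]
      constructor
      · rintro ⟨hx, rfl⟩
        cases t <;> simp
      · rintro (⟨rfl, rfl⟩ | ⟨rfl, rfl⟩) <;> simp [hjf, hjt]
    rw [hcdef]; simp only; rw [this]
    simp
  have hle : ∀ k : Fin n, k ≠ j → c k ≤ 1 := by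
    intro k hk
    rw [hcdef]
    simp only
    rw [Finset.card_le_one]
    intro a ha b hb
    simp only [Finset.mem_filter] at ha hb
    by_contra hne
    have h2 : a.2 ≠ b.2 := by
      intro h
      exact hne (Prod.ext (ha.2.trans hb.2.symm) h)
    have ha' : (k, a.2) ∈ A := by
      have h' : a = (k, a.2) := Prod.ext ha.2 rfl
      rw [← h']; exact ha.1
    have hb' : (k, b.2) ∈ A := by
      have h' : b = (k, b.2) := Prod.ext hb.2 rfl
      rw [← h']; exact hb.1
    apply huniq k hk
    cases h2a : a.2 <;> cases h2b : b.2 <;> simp_all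
  set S := (Finset.univ : Finset (Fin n)) \ {i, j} with hSdef
  have hiS : i ∉ S := by simp [hSdef]
  have hjS : j ∉ S := by simp [hSdef]
  have hunivsplit : (Finset.univ : Finset (Fin n)) = insert i (insert j S) := by
    ext k
    simp [hSdef]
    tauto
  have hsum2 : c i + (c j + ∑ k ∈ S, c k) = n := by
    have h' : ∑ k, c k = c i + (c j + ∑ k ∈ S, c k) := by
      rw [hunivsplit, Finset.sum_insert (by simp [hiS, hij]), Finset.sum_insert hjS]
    omega
  have hScard : S.card = n - 2 := by
    rw [hSdef, Finset.card_sdiff_of_subset (by simp)]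
    simp [Finset.card_pair hij]
  have hge : ∀ k : Fin n, k ≠ i → 1 ≤ c k := by
    intro k hk
    by_contra h
    push_neg at h
    rcases eq_or_ne k j with rfl | hkj
    · omega
    have hkS : k ∈ S := by simp [hSdef, hk, hkj]
    have hlt : ∑ x ∈ S, c x < ∑ x ∈ S, 1 := by
      apply Finset.sum_lt_sum
      · intro x hx
        apply hle
        simp [hSdef] at hx
        exact hx.2
      · exact ⟨k, hkS, by omega⟩
    rw [Finset.sum_const, smul_eq_mul, mul_one] at hlt
    omega
  have hex : ∀ k : Fin n, k ≠ i → ((k, false) ∈ A ∨ (k, true) ∈ A) := by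
    intro k hk
    obtain ⟨x, hx⟩ := Finset.card_pos.mp (hge k hk)
    simp only [Finset.mem_filter] at hx
    have : x = (k, x.2) := Prod.ext hx.2 rfl
    rw [this] at hx
    cases h2 : x.2
    · rw [h2] at hx; exact Or.inl hx.1
    · rw [h2] at hx; exact Or.inr hx.1
  -- construct B
  set m := (A.filter (fun p => p.2 = true)).card with hmdef
  obtain ⟨b, hbspec⟩ : ∃ b : Bool, (b = true ↔ (σ + m) % 2 = 1) :=
    ⟨decide ((σ + m) % 2 = 1), by simp⟩
  obtain ⟨B, hBdef⟩ : ∃ B : Finset (GroundSet n),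
      B = insert ((i, b) : GroundSet n) (A.erase (j, false)) := ⟨_, rfl⟩
  have hBmem : ∀ x : GroundSet n, x ∈ B ↔ x = (i, b) ∨ (x ∈ A ∧ x ≠ (j, false)) := by
    intro x
    simp [hBdef, Finset.mem_insert, Finset.mem_erase, and_comm]
  have hBtrans : IsTransversal B := by
    intro k
    rcases eq_or_ne k i with rfl | hki
    · rw [hBmem, hBmem]
      simp only [Prod.mk.injEq, true_and]
      cases b <;> simp [hif, hit]
    rcases eq_or_ne k j with rfl | hkj
    · rw [hBmem, hBmem]
      simp [Prod.ext_iff, hij.symm, hjt]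
    · rw [hBmem, hBmem]
      have h1 : ((k, false) : GroundSet n) ≠ (i, b) := by simp [Prod.ext_iff, hki]
      have h2 : ((k, true) : GroundSet n) ≠ (i, b) := by simp [Prod.ext_iff, hki]
      have h3 : ((k, false) : GroundSet n) ≠ (j, false) := by simp [Prod.ext_iff, hkj]
      have h4 : ((k, true) : GroundSet n) ≠ (j, false) := by simp
      simp only [h1, h2, h3, h4, false_or, and_true, ne_eq, not_false_eq_true]
      constructor
      · intro hf ht
        exact huniq k hkj ⟨hf, ht⟩
      · intro ht
        rcases hex k hki with h | h
        · exact h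
        · exact absurd h ht
  have hfB : (B.filter (fun p => p.2 = true)).card = m + (if b then 1 else 0) := by
    rw [hBdef, Finset.filter_insert]
    have herase : (A.erase ((j, false) : GroundSet n)).filter (fun p => p.2 = true)
        = A.filter (fun p => p.2 = true) := by
      rw [Finset.filter_erase]
      apply Finset.erase_eq_of_notMem
      simp
    cases b
    · rw [if_neg (by simp : ¬((i, false) : GroundSet n).2 = true), herase, ← hmdef]
      simp
    · rw [if_pos rfl, herase, Finset.card_insert_of_notMem (by simp [hit]), ← hmdef]
      simp
  have hBcard : (B.filter (fun p => p.2 = true)).card % 2 = σ := by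
    rw [hfB]
    cases b
    · simp only [Bool.false_eq_true, false_iff] at hbspec
      have h' : (m + if (false : Bool) = true then 1 else 0) = m := by simp
      rw [h']
      omega
    · simp only [true_iff] at hbspec
      have h' : (m + if (true : Bool) = true then 1 else 0) = m + 1 := by simp
      rw [h']
      omega
  have key := hrGP4 B hBtrans hBcard i j hij
  have e1 : (B \ pr i) ∪ pr j = A := by
    ext x
    simp only [Finset.mem_union, Finset.mem_sdiff, hBmem, pr, Finset.mem_insert,
      Finset.mem_singleton]
    constructor
    · rintro (⟨hx1 | ⟨hx2, hx3⟩, hx4⟩ | (rfl | rfl))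
      · exfalso; apply hx4; cases hb2 : b
        · left; rw [hx1, hb2]
        · right; rw [hx1, hb2]
      · exact hx2
      · exact hjf
      · exact hjt
    · intro hx
      rcases eq_or_ne x ((j, false) : GroundSet n) with rfl | hxj
      · right; left; rfl
      · left
        refine ⟨Or.inr ⟨hx, hxj⟩, ?_⟩
        rintro (rfl | rfl)
        · exact hif hx
        · exact hit hx
  have e2 : (B ∪ pr i) \ pr j = (A ∪ pr i) \ pr j := by
    ext x
    simp only [Finset.mem_sdiff, Finset.mem_union, hBmem, pr, Finset.mem_insert,
      Finset.mem_singleton]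
    constructor
    · rintro ⟨hx1 | hx2, hx3⟩
      · rcases hx1 with rfl | ⟨hx4, _⟩
        · refine ⟨Or.inr ?_, hx3⟩
          cases b
          · left; rfl
          · right; rfl
        · exact ⟨Or.inl hx4, hx3⟩
      · exact ⟨Or.inr hx2, hx3⟩
    · rintro ⟨hx1 | hx2, hx3⟩
      · refine ⟨Or.inl (Or.inr ⟨hx1, ?_⟩), hx3⟩
        intro h
        exact hx3 (Or.inl h)
      · exact ⟨Or.inr hx2, hx3⟩
  rw [e1, e2] at key
  rw [key]
  congr 1
  have hjfB : ((j, false) : GroundSet n) ∉ B := by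
    rw [hBmem]
    simp [Prod.ext_iff, hij.symm]
  have hifB : ((i, false) : GroundSet n) ∈ B ↔ b = false := by
    rw [hBmem]
    constructor
    · rintro (h | ⟨h, _⟩)
      · exact (Prod.ext_iff.mp h).2.symm
      · exact absurd h hif
    · intro h
      left
      rw [h]
  have hsq : ε * ε = 1 := tract_neg_one_sq T ε hε₀ hε
  rw [if_neg hjfB]
  have hpow : ∀ x y : ℕ, x % 2 = y % 2 → ε ^ x = ε ^ y := by
    intro x y h
    rw [pow_parity hsq x, pow_parity hsq y, h]
  apply hpow
  cases b
  · simp only [Bool.false_eq_true, false_iff] at hbspec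
    rw [if_pos (hifB.mpr rfl)]
    omega
  · simp only [true_iff] at hbspec
    simp only [Bool.true_eq_false, iff_false] at hifB
    rw [if_neg hifB]
    omega
end

section
/- Let M be an antisymmetric matroid on [n]∪[n]*, S a hyper-transversal, and {i,i*} the skew pair contained in S. If S \ {i'} is a basis of M for some i' ∈ S, then S \ {i} or S \ {i*} is a basis of M. -/
/-- A hyper-transversal: a transversal with one extra element added. -/
def IsHyperTransversal {n : ℕ} (S : Finset (GroundSet n)) : Prop :=
  ∃ (T : Finset (GroundSet n)) (x : GroundSet n),
    IsTransversal T ∧ x ∉ T ∧ S = insert x T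

/-- A hypo-transversal: a transversal with one element removed. -/
def IsHypoTransversal {n : ℕ} (S : Finset (GroundSet n)) : Prop :=
  ∃ (T : Finset (GroundSet n)) (x : GroundSet n),
    IsTransversal T ∧ x ∈ T ∧ S = T.erase x

/-- An antisymmetric matroid on `[n] ∪ [n]*`: a nonempty collection `𝓑` of
transversals and almost-transversals such that (1) for any hyper-transversal `S`
and hypo-transversal `S'` there are no or at least two `x ∈ S \ S'` with both
`S \ {x}` and `S' ∪ {x}` in `𝓑`, and (2) for any transversal `T` and distinct
`i, j ∈ [n]`, `T \ {i,i*} ∪ {j,j*} ∈ 𝓑` iff `T ∪ {i,i*} \ {j,j*} ∈ 𝓑`. -/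
def IsAntisymmetricMatroid {n : ℕ} (𝓑 : Finset (Finset (GroundSet n))) : Prop :=
  𝓑.Nonempty ∧ (∀ B ∈ 𝓑, IsTransversal B ∨ IsAlmostTransversal B) ∧
  (∀ S S' : Finset (GroundSet n), IsHyperTransversal S → IsHypoTransversal S' →
    (((S \ S').filter (fun x => S.erase x ∈ 𝓑 ∧ insert x S' ∈ 𝓑)).card = 0
      ∨ 2 ≤ ((S \ S').filter (fun x => S.erase x ∈ 𝓑 ∧ insert x S' ∈ 𝓑)).card)) ∧
  (∀ T : Finset (GroundSet n), IsTransversal T → ∀ i j : Fin n, i ≠ j →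
    (((T \ pr i) ∪ pr j) ∈ 𝓑 ↔ ((T ∪ pr i) \ pr j) ∈ 𝓑))

section AMaux
variable {n : ℕ}

lemma st_st (x : GroundSet n) : st (st x) = x := by simp [st]

lemma ne_st (x : GroundSet n) : x ≠ st x := by
  simp [st, Prod.ext_iff]

lemma fst_st (x : GroundSet n) : (st x).1 = x.1 := rfl

lemma mem_pr {z : GroundSet n} {i : Fin n} : z ∈ pr i ↔ z.1 = i := by
  obtain ⟨a, b⟩ := z; cases b <;> simp [pr, Prod.ext_iff]

lemma eq_or_eq_st {z x : GroundSet n} (h : z.1 = x.1) : z = x ∨ z = st x := by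
  obtain ⟨a, b⟩ := z; obtain ⟨c, d⟩ := x
  simp only at h; subst h
  cases b <;> cases d <;> simp [st, Prod.ext_iff]

lemma not_mem_st {T : Finset (GroundSet n)} (hT : IsTransversal T) {z : GroundSet n}
    (hz : z ∈ T) : st z ∉ T := by
  obtain ⟨a, b⟩ := z; have := hT a; cases b <;> simp [st] at * <;> tauto

lemma mem_st {T : Finset (GroundSet n)} (hT : IsTransversal T) {z : GroundSet n}
    (hz : z ∉ T) : st z ∈ T := by
  obtain ⟨a, b⟩ := z; have := hT a; cases b <;> simp [st] at * <;> tauto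

lemma flip_trans {T : Finset (GroundSet n)} (hT : IsTransversal T) {z : GroundSet n}
    (hz : z ∈ T) : IsTransversal (insert (st z) (T.erase z)) := by
  intro k
  have h1 := hT k
  have h2 := not_mem_st hT hz
  by_cases hk : k = z.1
  · subst hk
    obtain ⟨a, b⟩ := z
    cases b <;> simp_all [st, Finset.mem_insert, Finset.mem_erase, Prod.ext_iff]
  · obtain ⟨a, b⟩ := z
    simp only at hk
    cases b <;>
      simp_all [st, Finset.mem_insert, Finset.mem_erase, Prod.ext_iff, Ne.symm hk]

end AMaux
/-- Let `M` be an antisymmetric matroid, `S` a hyper-transversal, and `{x, x*}` the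
skew pair contained in `S`.  If `S \ {i'}` is a basis for some `i' ∈ S`, then
`S \ {x}` or `S \ {x*}` is a basis. -/
theorem antisymmetricMatroid_hyperTransversal {n : ℕ}
    (𝓑 : Finset (Finset (GroundSet n))) (h : IsAntisymmetricMatroid 𝓑)
    (S : Finset (GroundSet n)) (hS : IsHyperTransversal S)
    (x : GroundSet n) (hx : skw x ⊆ S)
    (i' : GroundSet n) (hi' : i' ∈ S) (hb : S.erase i' ∈ 𝓑) :
    S.erase x ∈ 𝓑 ∨ S.erase (st x) ∈ 𝓑 := by
  classical
  obtain ⟨-, -, hAx1, hAx2⟩ := h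
  have hxS : x ∈ S := hx (by simp [skw])
  have hsxS : st x ∈ S := hx (by simp [skw])
  by_cases e1 : i' = x
  · exact Or.inl (e1 ▸ hb)
  by_cases e2 : i' = st x
  · exact Or.inr (e2 ▸ hb)
  have hcoord : i'.1 ≠ x.1 := by
    intro hc
    rcases eq_or_eq_st hc with hh | hh
    · exact e1 hh
    · exact e2 hh
  -- S.erase x is a transversal
  have hT0 : IsTransversal (S.erase x) := by
    obtain ⟨T, y, hT, hyT, hSdef⟩ := hS
    have hyx : y = x ∨ y = st x := by
      by_contra hcon
      push_neg at hcon
      have hxT : x ∈ T := by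
        rcases Finset.mem_insert.1 (hSdef ▸ hxS) with hh | hh
        · exact absurd hh.symm hcon.1
        · exact hh
      have hsxT : st x ∈ T := by
        rcases Finset.mem_insert.1 (hSdef ▸ hsxS) with hh | hh
        · exact absurd hh.symm hcon.2
        · exact hh
      exact not_mem_st hT hxT hsxT
    rcases hyx with rfl | rfl
    · rw [hSdef, Finset.erase_insert hyT]; exact hT
    · have hxT : x ∈ T := by
        have := mem_st hT hyT; rwa [st_st] at this
      rw [hSdef, Finset.erase_insert_of_ne (Ne.symm (ne_st x))]
      exact flip_trans hT hxT
  have hstxT0 : st x ∈ S.erase x :=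
    Finset.mem_erase.2 ⟨Ne.symm (ne_st x), hsxS⟩
  have hi'T0 : i' ∈ S.erase x := Finset.mem_erase.2 ⟨e1, hi'⟩
  have hsti'S : st i' ∉ S := by
    intro hmem
    have : st i' ∈ S.erase x := Finset.mem_erase.2 ⟨by
      intro hh
      exact hcoord (by rw [← fst_st i', hh]), hmem⟩
    exact not_mem_st hT0 hi'T0 this
  -- axiom 2 to get A ∈ 𝓑
  set A : Finset (GroundSet n) := ((S.erase x) \ pr x.1) ∪ pr i'.1 with hAdef
  have hAmem : ∀ z : GroundSet n, z ∈ A ↔ ((z ∈ S ∧ z.1 ≠ x.1) ∨ z.1 = i'.1) := by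
    intro z
    simp only [hAdef, Finset.mem_union, Finset.mem_sdiff, Finset.mem_erase, mem_pr]
    constructor
    · rintro (⟨⟨hne, hzS⟩, h2⟩ | hh)
      · exact Or.inl ⟨hzS, h2⟩
      · exact Or.inr hh
    · rintro (⟨hzS, h2⟩ | hh)
      · exact Or.inl ⟨⟨fun e => h2 (by rw [e]), hzS⟩, h2⟩
      · exact Or.inr hh
  have hRHS : ((S.erase x ∪ pr x.1) \ pr i'.1) = S.erase i' := by
    ext z
    simp only [Finset.mem_sdiff, Finset.mem_union, Finset.mem_erase, mem_pr]
    constructor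
    · rintro ⟨hz1 | hz2, hz3⟩
      · exact ⟨fun e => hz3 (by rw [e]), hz1.2⟩
      · rcases eq_or_eq_st hz2 with rfl | rfl
        · exact ⟨fun e => hz3 (by rw [e]), hxS⟩
        · exact ⟨fun e => hz3 (by rw [e]), hsxS⟩
    · rintro ⟨hne, hzS⟩
      have hz1 : z.1 ≠ i'.1 := by
        intro e
        rcases eq_or_eq_st e with rfl | rfl
        · exact hne rfl
        · exact hsti'S hzS
      refine ⟨?_, hz1⟩
      by_cases hzx : z = x
      · exact Or.inr (by rw [hzx])
      · exact Or.inl ⟨hzx, hzS⟩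
  have hA : A ∈ 𝓑 := by
    have key := hAx2 (S.erase x) hT0 x.1 i'.1 (Ne.symm hcoord)
    exact key.2 (hRHS ▸ hb)
  have hi'A : i' ∈ A := (hAmem i').2 (Or.inr rfl)
  have hxA : x ∉ A := by
    intro hh
    rcases (hAmem x).1 hh with ⟨-, hc⟩ | hc
    · exact hc rfl
    · exact hcoord hc.symm
  -- S' := A.erase i' is a hypo-transversal
  set S' : Finset (GroundSet n) := A.erase i' with hS'def
  have hS'mem : ∀ z : GroundSet n, z ∈ S' ↔ (z = st i' ∨ (z ∈ S ∧ z.1 ≠ x.1 ∧ z ≠ i')) := by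
    intro z
    simp only [hS'def, Finset.mem_erase, hAmem]
    constructor
    · rintro ⟨hne, ⟨hzS, h2⟩ | hh⟩
      · exact Or.inr ⟨hzS, h2, hne⟩
      · rcases eq_or_eq_st hh with rfl | rfl
        · exact absurd rfl hne
        · exact Or.inl rfl
    · rintro (rfl | ⟨hzS, h2, h3⟩)
      · exact ⟨Ne.symm (ne_st i'), Or.inr rfl⟩
      · exact ⟨h3, Or.inl ⟨hzS, h2⟩⟩
  have hS'hypo : IsHypoTransversal S' := by
    have hT1 : IsTransversal (insert x ((S.erase x).erase (st x))) := by
      have := flip_trans hT0 hstxT0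
      rwa [st_st] at this
    have hi'T1 : i' ∈ insert x ((S.erase x).erase (st x)) :=
      Finset.mem_insert.2 (Or.inr (Finset.mem_erase.2 ⟨e2, hi'T0⟩))
    have hT2 : IsTransversal
        (insert (st i') ((insert x ((S.erase x).erase (st x))).erase i')) :=
      flip_trans hT1 hi'T1
    refine ⟨_, x, hT2, ?_, ?_⟩
    · exact Finset.mem_insert.2 (Or.inr (Finset.mem_erase.2 ⟨Ne.symm e1, Finset.mem_insert_self _ _⟩))
    · ext z
      rw [hS'mem z]
      simp only [Finset.mem_erase, Finset.mem_insert]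
      constructor
      · rintro (rfl | ⟨hzS, h2, h3⟩)
        · refine ⟨fun e => hcoord (by rw [← fst_st i', e]), Or.inl rfl⟩
        · have hzx : z ≠ x := fun e => h2 (by rw [e])
          have hzsx : z ≠ st x := fun e => h2 (by rw [e]; rfl)
          exact ⟨hzx, Or.inr ⟨h3, Or.inr ⟨hzsx, hzx, hzS⟩⟩⟩
      · rintro ⟨hzx, rfl | ⟨h3, rfl | ⟨hzsx, -, hzS⟩⟩⟩
        · exact Or.inl rfl
        · exact absurd rfl hzx
        · refine Or.inr ⟨hzS, ?_, h3⟩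
          intro e
          rcases eq_or_eq_st e with rfl | rfl
          · exact hzx rfl
          · exact hzsx rfl
  -- the exchange axiom
  have hdiff : S \ S' = {x, st x, i'} := by
    ext z
    simp only [Finset.mem_sdiff, Finset.mem_insert, Finset.mem_singleton, hS'mem]
    constructor
    · rintro ⟨hzS, hz2⟩
      push_neg at hz2
      by_cases hzi : z = i'
      · exact Or.inr (Or.inr hzi)
      · have h3 := hz2.2 hzS
        by_cases hzc : z.1 = x.1
        · rcases eq_or_eq_st hzc with rfl | rfl
          · exact Or.inl rfl
          · exact Or.inr (Or.inl rfl)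
        · exact absurd (h3 hzc) hzi
    · rintro (rfl | rfl | rfl)
      · refine ⟨hxS, ?_⟩
        rintro (rfl | ⟨-, hc, -⟩)
        · exact hcoord rfl
        · exact hc rfl
      · refine ⟨hsxS, ?_⟩
        rintro (hc | ⟨-, hc, -⟩)
        · have : x = i' := by simpa [st_st] using congrArg st hc
          exact e1 this.symm
        · exact hc rfl
      · refine ⟨hi', ?_⟩
        rintro (hc | ⟨-, -, hc⟩)
        · exact hsti'S (hc ▸ hi')
        · exact hc rfl
  have key1 := hAx1 S S' hS hS'hypo
  set D := (S \ S').filter (fun z => S.erase z ∈ 𝓑 ∧ insert z S' ∈ 𝓑) with hDdef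
  have hi'D : i' ∈ D := by
    refine Finset.mem_filter.2 ⟨by rw [hdiff]; simp, hb, ?_⟩
    rw [hS'def, Finset.insert_erase hi'A]
    exact hA
  have hcard : 2 ≤ D.card := by
    rcases key1 with h0 | h2
    · exact absurd (Finset.card_eq_zero.1 h0) (Finset.ne_empty_of_mem hi'D)
    · exact h2
  by_contra hcon
  push_neg at hcon
  obtain ⟨hc1, hc2⟩ := hcon
  have hsub : D ⊆ {i'} := by
    intro z hz
    obtain ⟨hz1, hz2, hz3⟩ := Finset.mem_filter.1 hz
    rw [hdiff] at hz1
    simp only [Finset.mem_insert, Finset.mem_singleton] at hz1 ⊢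
    rcases hz1 with rfl | rfl | rfl
    · exact absurd hz2 hc1
    · exact absurd hz2 hc2
    · rfl
  have := Finset.card_le_card hsub
  simp only [Finset.card_singleton] at this
  omega
end

section
/- Let M be an orthogonal matroid all of whose bases B satisfy |B ∩ [n]*| ≡ σ (mod 2). If a transversal T carries a circuit C of M (i.e., C ⊆ T and T △ {x,x*} is a basis for each x ∈ C), and C is nonempty, then |T ∩ [n]*| ≡ 1 - σ (mod 2). -/
/-- An orthogonal matroid on `[n] ∪ [n]*`: a nonempty collection of transversals
satisfying the strong exchange axiom. -/
def IsOrthogonalMatroid {n : ℕ} (𝓑 : Finset (Finset (GroundSet n))) : Prop :=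
  𝓑.Nonempty ∧ (∀ B ∈ 𝓑, IsTransversal B) ∧
  ∀ B₁ ∈ 𝓑, ∀ B₂ ∈ 𝓑, ∀ x ∈ symmDiff B₁ B₂,
    ∃ y ∈ (symmDiff B₁ B₂) \ skw x,
      symmDiff B₁ (skw x ∪ skw y) ∈ 𝓑 ∧ symmDiff B₂ (skw x ∪ skw y) ∈ 𝓑

/-- A subtransversal: a subset of a transversal, i.e. a set containing no full
skew pair. -/
def IsSubtransversal {n : ℕ} (C : Finset (GroundSet n)) : Prop :=
  ∀ i : Fin n, ¬((i, false) ∈ C ∧ (i, true) ∈ C)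

/-- A circuit of the collection `𝓑`: a minimal subtransversal not contained in
any member of `𝓑`. -/
def IsCircuit {n : ℕ} (𝓑 : Finset (Finset (GroundSet n)))
    (C : Finset (GroundSet n)) : Prop :=
  IsSubtransversal C ∧ (∀ B ∈ 𝓑, ¬ C ⊆ B) ∧
  (∀ C' ⊂ C, ∃ B ∈ 𝓑, C' ⊆ B)

/-- A transversal `T` carries a circuit `C` if `C ⊆ T` and `T △ {x,x*}` is a
basis for each `x ∈ C`. -/
def Carries {n : ℕ} (𝓑 : Finset (Finset (GroundSet n)))
    (T C : Finset (GroundSet n)) : Prop :=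
  C ⊆ T ∧ ∀ x ∈ C, symmDiff T (skw x) ∈ 𝓑

/-- If all bases `B` of an orthogonal matroid satisfy `|B ∩ [n]*| ≡ σ (mod 2)` and
a transversal `T` carries a nonempty circuit `C`, then `|T ∩ [n]*| ≡ 1 - σ (mod 2)`. -/
theorem carrier_parity {n : ℕ}
    (𝓑 : Finset (Finset (GroundSet n))) (h : IsOrthogonalMatroid 𝓑)
    (σ : ℕ) (hσ₁ : σ ≤ 1)
    (hσ : ∀ B ∈ 𝓑, (B.filter (fun p => p.2 = true)).card % 2 = σ)
    (T : Finset (GroundSet n)) (hT : IsTransversal T)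
    (C : Finset (GroundSet n)) (hC : IsCircuit 𝓑 C)
    (hcar : Carries 𝓑 T C) (hne : C.Nonempty) :
    (T.filter (fun p => p.2 = true)).card % 2 = 1 - σ := by
  obtain ⟨x, hx⟩ := hne
  have hB : symmDiff T (skw x) ∈ 𝓑 := hcar.2 x hx
  have hσB := hσ _ hB
  have hfilter : (symmDiff T (skw x)).filter (fun p => p.2 = true)
      = symmDiff (T.filter (fun p => p.2 = true)) ((skw x).filter (fun p => p.2 = true)) := by
    ext p
    simp only [Finset.mem_filter, Finset.mem_symmDiff]
    tauto
  have hskw : (skw x).filter (fun p => p.2 = true) = {(x.1, true)} := by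
    obtain ⟨i, b⟩ := x
    cases b <;> simp [skw, st, Finset.filter_insert, Finset.filter_singleton]
  rw [hfilter, hskw] at hσB
  set A := T.filter (fun p => p.2 = true) with hA
  have hcard : (symmDiff A {(x.1, true)}).card % 2 = (A.card + 1) % 2 := by
    by_cases hm : (x.1, true) ∈ A
    · have : symmDiff A {(x.1, true)} = A.erase (x.1, true) := by
        ext p
        simp [Finset.mem_symmDiff, Finset.mem_erase]
        constructor
        · rintro (⟨h1, h2⟩ | ⟨h1, h2⟩)
          · exact ⟨fun e => h2 e, h1⟩
          · exact absurd (h1 ▸ hm) h2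
        · rintro ⟨h1, h2⟩; exact Or.inl ⟨h2, h1⟩
      rw [this, Finset.card_erase_of_mem hm]
      have : 1 ≤ A.card := Finset.card_pos.mpr ⟨_, hm⟩
      omega
    · have : symmDiff A {(x.1, true)} = insert (x.1, true) A := by
        ext p
        simp [Finset.mem_symmDiff, Finset.mem_insert]
        constructor
        · rintro (⟨h1, h2⟩ | ⟨h1, h2⟩)
          · exact Or.inr h1
          · exact Or.inl h1
        · rintro (rfl | h1)
          · exact Or.inr ⟨rfl, hm⟩
          · exact Or.inl ⟨h1, fun e => hm (e ▸ h1)⟩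
      rw [this, Finset.card_insert_of_notMem hm]
  rw [hcard] at hσB
  omega
end
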